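/- arXiv:1701.05258 — 2 statements merged into one kernel-verified Lean document; each statement's English description precedes it below -/
import Mathlib

section
/- If (u,w) solves the potential system w_x = t u_t − u, w_t = t c(u)² u_x, and 1 + B u(x,t) > 0 everywhere, B ∈ ℝ, then under the change of variables x* = x − B w, t* = t/(1+Bu), u* = u/(1+Bu), w* = w, c*(u/(1+Bu)) = (1+Bu)² c(u), the transformed functions solve the same potential system in the starred variables (formal statement: the transformation maps the solution manifold of the system into itself). -/
noncomputable def pdx (u : ℝ → ℝ → ℝ) (x t : ℝ) : ℝ := deriv (fun y => u y t) x
noncomputable def pdt (u : ℝ → ℝ → ℝ) (x t : ℝ) : ℝ := deriv (fun s => u x s) t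

lemma hd_x (f : ℝ → ℝ → ℝ) (hf : ContDiff ℝ (⊤ : ℕ∞) (Function.uncurry f)) (x t : ℝ) :
    HasDerivAt (fun y => f y t) ((fderiv ℝ (Function.uncurry f) (x, t)) (1, 0)) x := by
  have h := (hf.differentiable (by simp) (x, t)).hasFDerivAt
  exact h.comp_hasDerivAt x (HasDerivAt.prodMk (hasDerivAt_id x) (hasDerivAt_const x t))

lemma hd_t (f : ℝ → ℝ → ℝ) (hf : ContDiff ℝ (⊤ : ℕ∞) (Function.uncurry f)) (x t : ℝ) :
    HasDerivAt (fun s => f x s) ((fderiv ℝ (Function.uncurry f) (x, t)) (0, 1)) t := by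
  have h := (hf.differentiable (by simp) (x, t)).hasFDerivAt
  exact h.comp_hasDerivAt t (HasDerivAt.prodMk (hasDerivAt_const t x) (hasDerivAt_id t))

lemma pdx_eq (f : ℝ → ℝ → ℝ) (hf : ContDiff ℝ (⊤ : ℕ∞) (Function.uncurry f)) (x t : ℝ) :
    pdx f x t = (fderiv ℝ (Function.uncurry f) (x, t)) (1, 0) := (hd_x f hf x t).deriv

lemma pdt_eq (f : ℝ → ℝ → ℝ) (hf : ContDiff ℝ (⊤ : ℕ∞) (Function.uncurry f)) (x t : ℝ) :
    pdt f x t = (fderiv ℝ (Function.uncurry f) (x, t)) (0, 1) := (hd_t f hf x t).deriv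

lemma hd_pdx (f : ℝ → ℝ → ℝ) (hf : ContDiff ℝ (⊤ : ℕ∞) (Function.uncurry f)) (x t : ℝ) :
    HasDerivAt (fun y => f y t) (pdx f x t) x := by
  rw [pdx_eq f hf]; exact hd_x f hf x t

lemma hd_pdt (f : ℝ → ℝ → ℝ) (hf : ContDiff ℝ (⊤ : ℕ∞) (Function.uncurry f)) (x t : ℝ) :
    HasDerivAt (fun s => f x s) (pdt f x t) t := by
  rw [pdt_eq f hf]; exact hd_t f hf x t

lemma fderiv_pair (f : ℝ → ℝ → ℝ) (hf : ContDiff ℝ (⊤ : ℕ∞) (Function.uncurry f)) (x t a b : ℝ) :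
    (fderiv ℝ (Function.uncurry f) (x, t)) (a, b) = a * pdx f x t + b * pdt f x t := by
  have hab : ((a, b) : ℝ × ℝ) = a • ((1 : ℝ), (0 : ℝ)) + b • ((0 : ℝ), (1 : ℝ)) := by
    simp [Prod.ext_iff]
  rw [hab, map_add, map_smul, map_smul, pdx_eq f hf, pdt_eq f hf]
  simp [smul_eq_mul]

lemma hd_comp (g : ℝ → ℝ → ℝ) (hg : ContDiff ℝ (⊤ : ℕ∞) (Function.uncurry g))
    (X T : ℝ → ℝ) (x X' T' : ℝ) (hX : HasDerivAt X X' x) (hT : HasDerivAt T T' x) :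
    HasDerivAt (fun y => g (X y) (T y))
      (X' * pdx g (X x) (T x) + T' * pdt g (X x) (T x)) x := by
  have h := (hg.differentiable (by simp) (X x, T x)).hasFDerivAt
  have := h.comp_hasDerivAt x (HasDerivAt.prodMk hX hT)
  rwa [fderiv_pair g hg _ _ _ _] at this

theorem stmt11 (u w us ws : ℝ → ℝ → ℝ) (c cstar : ℝ → ℝ) (B : ℝ)
    (hu : ContDiff ℝ (⊤ : ℕ∞) (Function.uncurry u))
    (hw : ContDiff ℝ (⊤ : ℕ∞) (Function.uncurry w))
    (hus : ContDiff ℝ (⊤ : ℕ∞) (Function.uncurry us))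
    (hws : ContDiff ℝ (⊤ : ℕ∞) (Function.uncurry ws))
    (hc : ContDiff ℝ (⊤ : ℕ∞) c)
    (hpos : ∀ x t, 1 + B * u x t > 0)
    -- the original potential system
    (h1 : ∀ x t, pdx w x t = t * pdt u x t - u x t)
    (h2 : ∀ x t, pdt w x t = t * (c (u x t))^2 * pdx u x t)
    -- the projective change of variables (x*,t*) and transformed unknowns
    (hust : ∀ x t, us (x - B * w x t) (t / (1 + B * u x t))
        = u x t / (1 + B * u x t))
    (hwst : ∀ x t, ws (x - B * w x t) (t / (1 + B * u x t)) = w x t)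
    (hcs : ∀ s, cstar (s / (1 + B * s)) = (1 + B * s)^2 * c s)
    -- the map (x,t) ↦ (x*,t*) is a diffeomorphism onto its image:
    (Ψ : ℝ × ℝ → ℝ × ℝ) (hΨ : ContDiff ℝ (⊤ : ℕ∞) Ψ)
    (hinv : ∀ x t, Ψ (x - B * w x t, t / (1 + B * u x t)) = (x, t)) :
    ∀ x t,
      pdx ws (x - B * w x t) (t / (1 + B * u x t))
        = (t / (1 + B * u x t)) * pdt us (x - B * w x t) (t / (1 + B * u x t))
          - us (x - B * w x t) (t / (1 + B * u x t)) ∧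
      pdt ws (x - B * w x t) (t / (1 + B * u x t))
        = (t / (1 + B * u x t))
          * (cstar (us (x - B * w x t) (t / (1 + B * u x t))))^2
          * pdx us (x - B * w x t) (t / (1 + B * u x t)) := by
  intro x t
  have hDpos := hpos x t
  have hDne : (1 + B * u x t) ≠ 0 := ne_of_gt hDpos
  -- derivatives of denominators
  have hdenx : HasDerivAt (fun y => 1 + B * u y t) (B * pdx u x t) x :=
    ((hd_pdx u hu x t).const_mul B).const_add 1
  have hdent : HasDerivAt (fun s => 1 + B * u x s) (B * pdt u x t) t :=
    ((hd_pdt u hu x t).const_mul B).const_add 1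
  -- Jacobian entries of the transformation
  have hXx : HasDerivAt (fun y => y - B * w y t) (1 - B * pdx w x t) x :=
    (hasDerivAt_id x).sub ((hd_pdx w hw x t).const_mul B)
  have hTx : HasDerivAt (fun y => t / (1 + B * u y t))
      ((0 * (1 + B * u x t) - t * (B * pdx u x t)) / (1 + B * u x t) ^ 2) x :=
    (hasDerivAt_const x t).div hdenx hDne
  have hXt : HasDerivAt (fun s => x - B * w x s) (0 - B * pdt w x t) t :=
    (hasDerivAt_const t x).sub ((hd_pdt w hw x t).const_mul B)
  have hTt : HasDerivAt (fun s => s / (1 + B * u x s))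
      ((1 * (1 + B * u x t) - t * (B * pdt u x t)) / (1 + B * u x t) ^ 2) t :=
    (hasDerivAt_id t).div hdent hDne
  rw [h1 x t] at hXx
  rw [h2 x t] at hXt
  -- equation A : x-derivative of us ∘ Φ
  have hcA : HasDerivAt (fun y => us (y - B * w y t) (t / (1 + B * u y t)))
      ((1 - B * (t * pdt u x t - u x t)) * pdx us (x - B * w x t) (t / (1 + B * u x t))
        + ((0 * (1 + B * u x t) - t * (B * pdx u x t)) / (1 + B * u x t) ^ 2)
          * pdt us (x - B * w x t) (t / (1 + B * u x t))) x :=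
    hd_comp us hus (fun y => y - B * w y t) (fun y => t / (1 + B * u y t)) x _ _ hXx hTx
  have hqA : HasDerivAt (fun y => u y t / (1 + B * u y t))
      ((pdx u x t * (1 + B * u x t) - u x t * (B * pdx u x t)) / (1 + B * u x t) ^ 2) x :=
    (hd_pdx u hu x t).div hdenx hDne
  have hfA : (fun y => us (y - B * w y t) (t / (1 + B * u y t)))
      = (fun y => u y t / (1 + B * u y t)) := funext fun y => hust y t
  rw [hfA] at hcA
  have hA := hcA.unique hqA
  -- equation B : t-derivative of us ∘ Φ
  have hcB : HasDerivAt (fun s => us (x - B * w x s) (s / (1 + B * u x s)))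
      ((0 - B * (t * (c (u x t))^2 * pdx u x t)) * pdx us (x - B * w x t) (t / (1 + B * u x t))
        + ((1 * (1 + B * u x t) - t * (B * pdt u x t)) / (1 + B * u x t) ^ 2)
          * pdt us (x - B * w x t) (t / (1 + B * u x t))) t :=
    hd_comp us hus (fun s => x - B * w x s) (fun s => s / (1 + B * u x s)) t _ _ hXt hTt
  have hqB : HasDerivAt (fun s => u x s / (1 + B * u x s))
      ((pdt u x t * (1 + B * u x t) - u x t * (B * pdt u x t)) / (1 + B * u x t) ^ 2) t :=
    (hd_pdt u hu x t).div hdent hDne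
  have hfB : (fun s => us (x - B * w x s) (s / (1 + B * u x s)))
      = (fun s => u x s / (1 + B * u x s)) := funext fun s => hust x s
  rw [hfB] at hcB
  have hB := hcB.unique hqB
  -- equation C : x-derivative of ws ∘ Φ
  have hcC : HasDerivAt (fun y => ws (y - B * w y t) (t / (1 + B * u y t)))
      ((1 - B * (t * pdt u x t - u x t)) * pdx ws (x - B * w x t) (t / (1 + B * u x t))
        + ((0 * (1 + B * u x t) - t * (B * pdx u x t)) / (1 + B * u x t) ^ 2)
          * pdt ws (x - B * w x t) (t / (1 + B * u x t))) x :=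
    hd_comp ws hws (fun y => y - B * w y t) (fun y => t / (1 + B * u y t)) x _ _ hXx hTx
  have hfC : (fun y => ws (y - B * w y t) (t / (1 + B * u y t)))
      = (fun y => w y t) := funext fun y => hwst y t
  rw [hfC] at hcC
  have hC := hcC.unique (hd_pdx w hw x t)
  rw [h1 x t] at hC
  -- equation D : t-derivative of ws ∘ Φ
  have hcD : HasDerivAt (fun s => ws (x - B * w x s) (s / (1 + B * u x s)))
      ((0 - B * (t * (c (u x t))^2 * pdx u x t)) * pdx ws (x - B * w x t) (t / (1 + B * u x t))
        + ((1 * (1 + B * u x t) - t * (B * pdt u x t)) / (1 + B * u x t) ^ 2)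
          * pdt ws (x - B * w x t) (t / (1 + B * u x t))) t :=
    hd_comp ws hws (fun s => x - B * w x s) (fun s => s / (1 + B * u x s)) t _ _ hXt hTt
  have hfD : (fun s => ws (x - B * w x s) (s / (1 + B * u x s)))
      = (fun s => w x s) := funext fun s => hwst x s
  rw [hfD] at hcD
  have hD2 := hcD.unique (hd_pdt w hw x t)
  rw [h2 x t] at hD2
  -- the differential of Ψ inverts the Jacobian
  have hΨd := (hΨ.differentiable (by simp)
      ((x - B * w x t, t / (1 + B * u x t)) : ℝ × ℝ)).hasFDerivAt
  have hPx : HasDerivAt (fun y => Ψ (y - B * w y t, t / (1 + B * u y t)))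
      (fderiv ℝ Ψ (x - B * w x t, t / (1 + B * u x t))
        ((1 - B * (t * pdt u x t - u x t)),
          ((0 * (1 + B * u x t) - t * (B * pdx u x t)) / (1 + B * u x t) ^ 2))) x :=
    hΨd.comp_hasDerivAt x (HasDerivAt.prodMk hXx hTx)
  have hfPx : (fun y => Ψ (y - B * w y t, t / (1 + B * u y t)))
      = fun y => ((y, t) : ℝ × ℝ) := funext fun y => hinv y t
  rw [hfPx] at hPx
  have hL1 := hPx.unique (HasDerivAt.prodMk (hasDerivAt_id x) (hasDerivAt_const x t))
  have hPt : HasDerivAt (fun s => Ψ (x - B * w x s, s / (1 + B * u x s)))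
      (fderiv ℝ Ψ (x - B * w x t, t / (1 + B * u x t))
        ((0 - B * (t * (c (u x t))^2 * pdx u x t)),
          ((1 * (1 + B * u x t) - t * (B * pdt u x t)) / (1 + B * u x t) ^ 2))) t :=
    hΨd.comp_hasDerivAt t (HasDerivAt.prodMk hXt hTt)
  have hfPt : (fun s => Ψ (x - B * w x s, s / (1 + B * u x s)))
      = fun s => ((x, s) : ℝ × ℝ) := funext fun s => hinv x s
  rw [hfPt] at hPt
  have hL2 := hPt.unique (HasDerivAt.prodMk (hasDerivAt_const t x) (hasDerivAt_id t))
  -- rewrite the goal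
  rw [hust x t, hcs (u x t)]
  -- abbreviations
  set u0 := u x t with hu0
  set c0 := c u0 with hc0
  set ux := pdx u x t with hux
  set ut := pdt u x t with hut
  set a := pdx us (x - B * w x t) (t / (1 + B * u0)) with ha
  set b := pdt us (x - B * w x t) (t / (1 + B * u0)) with hb
  set e := pdx ws (x - B * w x t) (t / (1 + B * u0)) with he
  set f := pdt ws (x - B * w x t) (t / (1 + B * u0)) with hf
  set XX := 1 - B * (t * ut - u0) with hXX
  set TX := (0 * (1 + B * u0) - t * (B * ux)) / (1 + B * u0) ^ 2 with hTX
  set XT := 0 - B * (t * c0 ^ 2 * ux) with hXT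
  set TT := (1 * (1 + B * u0) - t * (B * ut)) / (1 + B * u0) ^ 2 with hTT
  -- nondegeneracy of the Jacobian
  have hdetraw : XX * TT - XT * TX ≠ 0 := by
    intro h0
    have hv1 : TT • ((XX, TX) : ℝ × ℝ) - TX • ((XT, TT) : ℝ × ℝ) = 0 := by
      simp only [Prod.smul_mk, Prod.mk_sub_mk, smul_eq_mul, Prod.mk_eq_zero]
      exact ⟨by linear_combination h0, by ring⟩
    have hw1 : TT • ((1 : ℝ), (0 : ℝ)) - TX • ((0 : ℝ), (1 : ℝ)) = (0 : ℝ × ℝ) := by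
      rw [← hL1, ← hL2, ← map_smul, ← map_smul, ← map_sub, hv1, map_zero]
    have hTT0 : TT = 0 ∧ TX = 0 := by
      simpa [Prod.smul_mk, Prod.mk_sub_mk, smul_eq_mul, Prod.mk_eq_zero] using hw1
    have hv2 : (-XT) • ((XX, TX) : ℝ × ℝ) + XX • ((XT, TT) : ℝ × ℝ) = 0 := by
      simp only [Prod.smul_mk, Prod.mk_add_mk, smul_eq_mul, Prod.mk_eq_zero]
      exact ⟨by ring, by linear_combination h0⟩
    have hw2 : (-XT) • ((1 : ℝ), (0 : ℝ)) + XX • ((0 : ℝ), (1 : ℝ)) = (0 : ℝ × ℝ) := by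
      rw [← hL1, ← hL2, ← map_smul, ← map_smul, ← map_add, hv2, map_zero]
    have hXX0 : XT = 0 ∧ XX = 0 := by
      have := hw2
      simp only [Prod.smul_mk, Prod.mk_add_mk, smul_eq_mul, Prod.mk_eq_zero] at this
      constructor <;> [linarith [this.1]; linarith [this.2]]
    rw [hXX0.2, hTT0.2] at hL1
    have hz : ((0 : ℝ), (0 : ℝ)) = (0 : ℝ × ℝ) := rfl
    rw [hz, map_zero] at hL1
    simp [Prod.ext_iff] at hL1
  -- polynomial versions of the four equations
  have hA' : (1 + B*u0 - B*(t*ut))*a*(1+B*u0)^2 - t*B*ux*b = ux := by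
    rw [hXX, hTX] at hA
    field_simp at hA
    linear_combination hA
  have hB' : -(B*t*c0^2*ux)*a*(1+B*u0)^2 + (1+B*u0-B*(t*ut))*b = ut := by
    rw [hXT, hTT] at hB
    field_simp at hB
    linear_combination hB
  have hC' : (1+B*u0-B*(t*ut))*e*(1+B*u0)^2 - t*B*ux*f = (t*ut-u0)*(1+B*u0)^2 := by
    rw [hXX, hTX] at hC
    field_simp at hC
    linear_combination hC
  have hD' : -(B*t*c0^2*ux)*e*(1+B*u0)^2 + (1+B*u0-B*(t*ut))*f = t*c0^2*ux*(1+B*u0)^2 := by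
    rw [hXT, hTT] at hD2
    field_simp at hD2
    linear_combination hD2
  -- polynomial determinant is nonzero
  have hdeteq : ((1+B*u0-B*(t*ut))^2 - B^2*t^2*c0^2*ux^2)
      = (1+B*u0)^2 * (XX * TT - XT * TX) := by
    rw [hXX, hTX, hXT, hTT]
    field_simp
    ring
  have hdetP : ((1+B*u0-B*(t*ut))^2 - B^2*t^2*c0^2*ux^2) ≠ 0 := by
    rw [hdeteq]
    exact mul_ne_zero (pow_ne_zero 2 hDne) hdetraw
  constructor
  · -- first starred equation
    have k1 : (((1+B*u0-B*(t*ut))^2 - B^2*t^2*c0^2*ux^2) * (1+B*u0)^2)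
        * ((1+B*u0)*e - t*b + u0) = 0 := by
      linear_combination ((1+B*u0)*((1+B*u0-B*(t*ut))*hC' + t*B*ux*hD'))
        - t*(B*t*c0^2*ux*(1+B*u0)^2*hA' + (1+B*u0-B*(t*ut))*(1+B*u0)^2*hB')
    have h7 : (1+B*u0)*e - t*b + u0 = 0 :=
      (mul_eq_zero.mp k1).resolve_left (mul_ne_zero hdetP (pow_ne_zero 2 hDne))
    field_simp
    linear_combination h7
  · -- second starred equation
    have k2 : (((1+B*u0-B*(t*ut))^2 - B^2*t^2*c0^2*ux^2) * (1+B*u0)^2)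
        * (f - t*(1+B*u0)^3*c0^2*a) = 0 := by
      linear_combination B*t*c0^2*ux*(1+B*u0)^2*hC' + (1+B*u0-B*(t*ut))*(1+B*u0)^2*hD'
        - t*(1+B*u0)^3*c0^2*((1+B*u0-B*(t*ut))*hA' + t*B*ux*hB')
    have h8 : f - t*(1+B*u0)^3*c0^2*a = 0 :=
      (mul_eq_zero.mp k2).resolve_left (mul_ne_zero hdetP (pow_ne_zero 2 hDne))
    field_simp
    linear_combination h8
end

section
/- Let f, g, h : ℝ → ℝ be smooth with f g h ≠ 0, m ∈ ℝ, and u(x,t) solve f(x) u_t = (g(x) u_x)_x + h(x) u^m. Let φ : ℝ → ℝ be a smooth diffeomorphism, δ₀, δ₁, δ₂ constants with δ₀ δ₁ ≠ 0, and ψ a positive smooth solution of (g ψ_x / ψ²)_x = 0. Then u*(φ(x), δ₁ t + δ₂) = ψ(x) u(x,t) solves f*(x*) u*_{t*} = (g*(x*) u*_{x*})_{x*} + h*(x*) (u*)^m, where f*∘φ = δ₀δ₁ f/(φ_x ψ²), g*∘φ = δ₀ φ_x g/ψ², h*∘φ = δ₀ h/(φ_x ψ^{m+1}). -/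
lemma exists_cont_inv (φ : ℝ → ℝ) (hbij : Function.Bijective φ)
    (hmono : StrictMono φ ∨ StrictAnti φ) :
    ∃ ι : ℝ → ℝ, Continuous ι ∧ ∀ y, φ (ι y) = y := by
  rcases hmono with hm | ha
  · let o := StrictMono.orderIsoOfSurjective φ hm hbij.2
    exact ⟨o.symm, o.symm.continuous, fun y =>
      StrictMono.orderIsoOfSurjective_self_symm_apply φ hm hbij.2 y⟩
  · set χ : ℝ → ℝ := fun z => φ (-z) with hχ
    have hmχ : StrictMono χ := fun a b hab => ha (neg_lt_neg hab)
    have hsχ : Function.Surjective χ := by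
      intro y
      obtain ⟨z, hz⟩ := hbij.2 y
      exact ⟨-z, by simpa [hχ] using hz⟩
    let o := StrictMono.orderIsoOfSurjective χ hmχ hsχ
    refine ⟨fun y => -(o.symm y), continuous_neg.comp o.symm.continuous, fun y => ?_⟩
    have := StrictMono.orderIsoOfSurjective_self_symm_apply χ hmχ hsχ y
    simpa [hχ] using this

set_option maxHeartbeats 1000000 in
theorem stmt12 (f g h fs gs hs : ℝ → ℝ) (m : ℝ) (u us : ℝ → ℝ → ℝ)
    (φ ψ : ℝ → ℝ) (δ0 δ1 δ2 : ℝ)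
    (hf : ContDiff ℝ (⊤ : ℕ∞) f) (hg : ContDiff ℝ (⊤ : ℕ∞) g) (hh : ContDiff ℝ (⊤ : ℕ∞) h)
    (hfne : ∀ x, f x ≠ 0) (hgne : ∀ x, g x ≠ 0) (hhne : ∀ x, h x ≠ 0)
    (hu : ContDiff ℝ (⊤ : ℕ∞) (Function.uncurry u)) (hupos : ∀ x t, 0 < u x t)
    (hus : ContDiff ℝ (⊤ : ℕ∞) (Function.uncurry us))
    (hφ : ContDiff ℝ (⊤ : ℕ∞) φ) (hφbij : Function.Bijective φ)
    (hφ' : ∀ x, deriv φ x ≠ 0)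
    (hψ : ContDiff ℝ (⊤ : ℕ∞) ψ) (hψpos : ∀ x, 0 < ψ x)
    (hψode : ∀ x, deriv (fun y => g y * deriv ψ y / (ψ y)^2) x = 0)
    (hδ : δ0 * δ1 ≠ 0)
    -- u solves the PDE
    (heq : ∀ x t, f x * pdt u x t
        = deriv (fun y => g y * pdx u y t) x + h x * u x t ^ m)
    -- transformed unknown and constitutive functions
    (hust : ∀ x t, us (φ x) (δ1 * t + δ2) = ψ x * u x t)
    (hfs : ∀ x, fs (φ x) = δ0 * δ1 * f x / (deriv φ x * (ψ x)^2))
    (hgs : ∀ x, gs (φ x) = δ0 * deriv φ x * g x / (ψ x)^2)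
    (hhs : ∀ x, hs (φ x) = δ0 * h x / (deriv φ x * ψ x ^ (m + 1))) :
    ∀ x t, fs (φ x) * pdt us (φ x) (δ1 * t + δ2)
        = deriv (fun y => gs y * pdx us y (δ1 * t + δ2)) (φ x)
          + hs (φ x) * us (φ x) (δ1 * t + δ2) ^ m := by
  have hδ0 : δ0 ≠ 0 := left_ne_zero_of_mul hδ
  have hδ1 : δ1 ≠ 0 := right_ne_zero_of_mul hδ
  have hψne : ∀ x, ψ x ≠ 0 := fun x => ne_of_gt (hψpos x)
  have hφI : ContDiff ℝ (⊤ : ℕ∞) φ := hφ.of_le (by simp)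
  have hψI : ContDiff ℝ (⊤ : ℕ∞) ψ := hψ.of_le (by simp)
  -- sections of u and us are smooth
  have hux : ∀ τ, ContDiff ℝ (⊤ : ℕ∞) (fun y => u y τ) := fun τ =>
    hu.comp (contDiff_id.prodMk contDiff_const)
  have hut : ∀ y, ContDiff ℝ (⊤ : ℕ∞) (fun τ => u y τ) := fun y =>
    hu.comp (contDiff_const.prodMk contDiff_id)
  have husx : ∀ τ, ContDiff ℝ (⊤ : ℕ∞) (fun y => us y τ) := fun τ =>
    hus.comp (contDiff_id.prodMk contDiff_const)
  have hust' : ∀ y, ContDiff ℝ (⊤ : ℕ∞) (fun τ => us y τ) := fun y =>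
    hus.comp (contDiff_const.prodMk contDiff_id)
  -- derivative facts
  have hdφ : ∀ y, HasDerivAt φ (deriv φ y) y := fun y =>
    ((hφ.differentiable (by simp)) y).hasDerivAt
  have hdψ : ∀ y, HasDerivAt ψ (deriv ψ y) y := fun y =>
    ((hψ.differentiable (by simp)) y).hasDerivAt
  -- strict monotonicity of φ from sign of the derivative
  have hφc' : Continuous (deriv φ) := ((contDiff_infty_iff_deriv.mp hφI).2).continuous
  have hsign : (∀ y, 0 < deriv φ y) ∨ (∀ y, deriv φ y < 0) := by
    by_contra hcon
    push_neg at hcon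
    obtain ⟨⟨a, ha⟩, ⟨b, hb⟩⟩ := hcon
    have h0 : (0 : ℝ) ∈ Set.uIcc (deriv φ a) (deriv φ b) :=
      Set.mem_uIcc.2 (Or.inl ⟨ha, hb⟩)
    obtain ⟨c, _, hc⟩ := intermediate_value_uIcc (hφc'.continuousOn) h0
    exact hφ' c hc
  have hmono : StrictMono φ ∨ StrictAnti φ := by
    rcases hsign with hp | hn
    · exact Or.inl (strictMono_of_deriv_pos hp)
    · exact Or.inr (strictAnti_of_deriv_neg hn)
  obtain ⟨ι, hιc, hιφ⟩ := exists_cont_inv φ hφbij hmono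
  intro x t
  have hιx : ι (φ x) = x := hφbij.1 (by rw [hιφ])
  have hι : HasDerivAt ι (deriv φ x)⁻¹ (φ x) := by
    refine HasDerivAt.of_local_left_inverse hιc.continuousAt ?_ (hφ' x)
      (Filter.Eventually.of_forall hιφ)
    rw [hιx]; exact hdφ x
  simp only [pdx, pdt] at heq ⊢
  -- notation for partial derivatives via HasDerivAt
  have hUx : ∀ y, HasDerivAt (fun z => u z t) (deriv (fun z => u z t) y) y := fun y =>
    (((hux t).differentiable (by simp)) y).hasDerivAt
  have hUt : HasDerivAt (fun τ => u x τ) (deriv (fun τ => u x τ) t) t :=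
    (((hut x).differentiable (by simp)) t).hasDerivAt
  have hUSx : ∀ y, HasDerivAt (fun z => us z (δ1 * t + δ2))
      (deriv (fun z => us z (δ1 * t + δ2)) y) y := fun y =>
    (((husx (δ1 * t + δ2)).differentiable (by simp)) y).hasDerivAt
  have hUSt : HasDerivAt (fun τ => us (φ x) τ) (deriv (fun τ => us (φ x) τ) (δ1 * t + δ2))
      (δ1 * t + δ2) :=
    (((hust' (φ x)).differentiable (by simp)) (δ1 * t + δ2)).hasDerivAt
  -- time derivative relation
  have htaff : HasDerivAt (fun τ => δ1 * τ + δ2) δ1 t := by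
    simpa using ((hasDerivAt_id t).const_mul δ1).add_const δ2
  have hteq : deriv (fun τ => us (φ x) τ) (δ1 * t + δ2) * δ1
      = ψ x * deriv (fun τ => u x τ) t := by
    have h1 : HasDerivAt (fun τ => us (φ x) (δ1 * τ + δ2))
        (deriv (fun τ => us (φ x) τ) (δ1 * t + δ2) * δ1) t := hUSt.comp t htaff
    have h2 : HasDerivAt (fun τ => ψ x * u x τ) (ψ x * deriv (fun τ => u x τ) t) t :=
      hUt.const_mul (ψ x)
    rw [show (fun τ => us (φ x) (δ1 * τ + δ2)) = fun τ => ψ x * u x τ from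
      funext fun τ => hust x τ] at h1
    exact h1.unique h2
  -- space derivative relation, at every y
  have hxeq : ∀ y, deriv (fun z => us z (δ1 * t + δ2)) (φ y) * deriv φ y
      = deriv ψ y * u y t + ψ y * deriv (fun z => u z t) y := by
    intro y
    have h1 : HasDerivAt (fun z => us (φ z) (δ1 * t + δ2))
        (deriv (fun z => us z (δ1 * t + δ2)) (φ y) * deriv φ y) y :=
      (hUSx (φ y)).comp y (hdφ y)
    have h2 : HasDerivAt (fun z => ψ z * u z t)
        (deriv ψ y * u y t + ψ y * deriv (fun z => u z t) y) y :=
      (hdψ y).mul (hUx y)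
    rw [show (fun z => us (φ z) (δ1 * t + δ2)) = fun z => ψ z * u z t from
      funext fun z => hust z t] at h1
    exact h1.unique h2
  -- the auxiliary function W
  set A : ℝ → ℝ := fun y => g y * deriv ψ y / (ψ y) ^ 2 with hA_def
  set C : ℝ → ℝ := fun y => g y * deriv (fun z => u z t) y with hC_def
  set W : ℝ → ℝ := fun y => δ0 * (A y * u y t + C y * (ψ y)⁻¹) with hW_def
  have hAcd : ContDiff ℝ (⊤ : ℕ∞) A :=
    ((hg.of_le (by simp)).mul (contDiff_infty_iff_deriv.mp hψI).2).div (hψI.pow 2)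
      (fun y => pow_ne_zero 2 (hψne y))
  have hCcd : ContDiff ℝ (⊤ : ℕ∞) C :=
    (hg.of_le (by simp)).mul (contDiff_infty_iff_deriv.mp ((hux t).of_le (by simp))).2
  have hA : HasDerivAt A 0 x := by
    have := ((hAcd.differentiable (by simp)) x).hasDerivAt
    rwa [hψode x] at this
  have hC : HasDerivAt C (deriv C x) x :=
    ((hCcd.differentiable (by simp)) x).hasDerivAt
  have hinvψ : HasDerivAt (fun y => (ψ y)⁻¹) (-deriv ψ x / (ψ x) ^ 2) x :=
    (hdψ x).inv (hψne x)
  have hW : HasDerivAt W (δ0 * ((0 * u x t + A x * deriv (fun z => u z t) x)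
      + (deriv C x * (ψ x)⁻¹ + C x * (-deriv ψ x / (ψ x) ^ 2)))) x :=
    ((hA.mul (hUx x)).add (hC.mul hinvψ)).const_mul δ0
  -- W equals the transformed flux composed with φ
  have hKφ : ∀ y, W y = gs (φ y) * deriv (fun z => us z (δ1 * t + δ2)) (φ y) := by
    intro y
    have hx := hxeq y
    have hpdx : deriv (fun z => us z (δ1 * t + δ2)) (φ y)
        = (deriv ψ y * u y t + ψ y * deriv (fun z => u z t) y) / deriv φ y := by
      rw [eq_div_iff (hφ' y)]; exact hx
    rw [hpdx, hgs y, hW_def, hA_def, hC_def]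
    field_simp [hφ' y, hψne y]
  -- transfer the derivative through ι
  have hW2 : HasDerivAt W (δ0 * ((0 * u x t + A x * deriv (fun z => u z t) x)
      + (deriv C x * (ψ x)⁻¹ + C x * (-deriv ψ x / (ψ x) ^ 2)))) (ι (φ x)) := by
    rw [hιx]; exact hW
  have hcompeq : W ∘ ι = fun z => gs z * deriv (fun w => us w (δ1 * t + δ2)) z := by
    funext z
    show W (ι z) = _
    rw [hKφ (ι z), hιφ z]
  have hK : HasDerivAt (fun z => gs z * deriv (fun w => us w (δ1 * t + δ2)) z)
      ((δ0 * ((0 * u x t + A x * deriv (fun z => u z t) x)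
      + (deriv C x * (ψ x)⁻¹ + C x * (-deriv ψ x / (ψ x) ^ 2)))) * (deriv φ x)⁻¹) (φ x) := by
    rw [← hcompeq]
    exact hW2.comp (φ x) hι
  have hKderiv := hK.deriv
  -- put everything together
  rw [hKderiv, hfs, hhs, hust x t]
  have hP : deriv (fun τ => us (φ x) τ) (δ1 * t + δ2)
      = ψ x * deriv (fun τ => u x τ) t / δ1 := by
    rw [eq_div_iff hδ1]; exact hteq
  rw [hP]
  rw [Real.mul_rpow (le_of_lt (hψpos x)) (le_of_lt (hupos x t)),
    Real.rpow_add_one (hψne x)]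
  have hψm : (0:ℝ) < ψ x ^ m := Real.rpow_pos_of_pos (hψpos x) m
  simp only [hA_def, hC_def]
  have hC'eq : deriv (fun y => g y * deriv (fun z => u z t) y) x
      = f x * deriv (fun s => u x s) t - h x * u x t ^ m := by linarith [heq x t]
  rw [hC'eq]
  have hΨmne : ψ x ^ m ≠ 0 := ne_of_gt hψm
  generalize hgen : ψ x ^ m = Ψm at hΨmne ⊢
  field_simp [hδ1, hφ' x, hψne x, hΨmne]
  apply mul_left_cancel₀ (mul_ne_zero (mul_ne_zero (pow_ne_zero 6 (hψne x))
    (pow_ne_zero 2 (hφ' x))) hΨmne)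
  field_simp [hψne x, hφ' x, hΨmne]
  ring
end
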